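/- arXiv:2503.03271 — 3 statements merged into one kernel-verified Lean document; each statement's English description precedes it below -/
import Mathlib

section
/- If ψ is a smooth M₄(ℂ)-valued solution of the photon wave equation -iħ γ^μ ∂_μ ψ + m Π ψ = 0, where Π ψ := Π₊ψΠ₊ + Π₋ψΠ₋, then every entry of ψ satisfies the wave equation □ψ = 0, where □ = ∂₀² - Δ. -/
open Matrix Complex Filter Asymptotics

noncomputable section

abbrev M2 : Type := Matrix (Fin 2) (Fin 2) ℂ
abbrev M4 : Type := Matrix (Fin 2 ⊕ Fin 2) (Fin 2 ⊕ Fin 2) ℂ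

/-- The Pauli matrices σ₁, σ₂, σ₃. -/
def σp : Fin 3 → M2 := ![!![0, 1; 1, 0], !![0, -I; I, 0], !![1, 0; 0, -1]]

/-- The Weyl-representation gamma matrices γ⁰, γ¹, γ², γ³. -/
def γ : Fin 4 → M4 :=
  ![fromBlocks 0 1 1 0,
    fromBlocks 0 (-σp 0) (σp 0) 0,
    fromBlocks 0 (-σp 1) (σp 1) 0,
    fromBlocks 0 (-σp 2) (σp 2) 0]

/-- Minkowski metric η = diag(1,-1,-1,-1). -/
def η : Fin 4 → Fin 4 → ℂ := fun μ ν => if μ = ν then (if μ = 0 then 1 else -1) else 0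

/-- γ⁵ := i γ⁰γ¹γ²γ³. -/
def γ5 : M4 := I • (γ 0 * γ 1 * γ 2 * γ 3)

def Pp : M4 := (1/2 : ℂ) • (1 + γ5)
def Pm : M4 := (1/2 : ℂ) • (1 - γ5)

/-- Projection onto diagonal blocks: Πψ = Π₊ψΠ₊ + Π₋ψΠ₋. -/
def Pmap (ψ : M4) : M4 := Pp * ψ * Pp + Pm * ψ * Pm

/-- Dirac adjoint of a 4×4 matrix: γ⁰ a† γ⁰. -/
def dadj (a : M4) : M4 := γ 0 * aᴴ * γ 0

/-- Partial derivative ∂_μ of a ℂ-valued function on R⁴. -/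
def pd (μ : Fin 4) (f : (Fin 4 → ℝ) → ℂ) (x : Fin 4 → ℝ) : ℂ :=
  fderiv ℝ f x (Pi.single μ 1)

/-- Partial derivative ∂_μ of an ℝ-valued function on R⁴. -/
def pdR (μ : Fin 4) (f : (Fin 4 → ℝ) → ℝ) (x : Fin 4 → ℝ) : ℝ :=
  fderiv ℝ f x (Pi.single μ 1)

def pdM4 (μ : Fin 4) (ψ : (Fin 4 → ℝ) → M4) : (Fin 4 → ℝ) → M4 :=
  fun x => Matrix.of fun i j => pd μ (fun y => ψ y i j) x

def pdM2 (μ : Fin 4) (χ : (Fin 4 → ℝ) → M2) : (Fin 4 → ℝ) → M2 :=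
  fun x => Matrix.of fun i j => pd μ (fun y => χ y i j) x

/-- The Dirac operator γ^μ ∂_μ. -/
def DiracOp (ψ : (Fin 4 → ℝ) → M4) : (Fin 4 → ℝ) → M4 :=
  fun x => ∑ μ : Fin 4, γ μ * pdM4 μ ψ x

/-- D₊ := ∂₀ + σ·∇. -/
def Dp (χ : (Fin 4 → ℝ) → M2) : (Fin 4 → ℝ) → M2 :=
  fun x => pdM2 0 χ x + ∑ k : Fin 3, σp k * pdM2 k.succ χ x

/-- D₋ := ∂₀ - σ·∇. -/
def Dm (χ : (Fin 4 → ℝ) → M2) : (Fin 4 → ℝ) → M2 :=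
  fun x => pdM2 0 χ x - ∑ k : Fin 3, σp k * pdM2 k.succ χ x

def SmoothM4 (ψ : (Fin 4 → ℝ) → M4) : Prop := ∀ i j, ContDiff ℝ (⊤ : ℕ∞) (fun x => ψ x i j)
def SmoothM2 (χ : (Fin 4 → ℝ) → M2) : Prop := ∀ i j, ContDiff ℝ (⊤ : ℕ∞) (fun x => χ x i j)

/-- The wave operator □ = ∂₀² - Δ on ℂ-valued functions. -/
def boxC (f : (Fin 4 → ℝ) → ℂ) : (Fin 4 → ℝ) → ℂ :=
  fun x => pd 0 (pd 0 f) x - ∑ k : Fin 3, pd k.succ (pd k.succ f) x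

-- Pauli algebra
lemma sig_sq (k : Fin 3) : σp k * σp k = 1 := by
  fin_cases k <;>
  · ext i j
    fin_cases i <;> fin_cases j <;>
      simp [σp, Matrix.mul_apply, Fin.sum_univ_two, Matrix.one_apply]

lemma sig_anti (k l : Fin 3) (h : k ≠ l) : σp k * σp l = -(σp l * σp k) := by
  fin_cases k <;> fin_cases l <;> first
  | exact absurd rfl h
  | · ext i j
      fin_cases i <;> fin_cases j <;>
        simp [σp, Matrix.mul_apply, Fin.sum_univ_two]

lemma sig012 : σp 0 * σp 1 * σp 2 = Complex.I • 1 := by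
  ext i j
  fin_cases i <;> fin_cases j <;>
    simp [σp, Matrix.mul_apply, Fin.sum_univ_two, Matrix.one_apply]

-- gamma matrices as blocks
lemma γ0_eq : γ 0 = fromBlocks 0 1 1 0 := rfl
lemma γ1_eq : γ 1 = fromBlocks 0 (-σp 0) (σp 0) 0 := rfl
lemma γ2_eq : γ 2 = fromBlocks 0 (-σp 1) (σp 1) 0 := rfl
lemma γ3_eq : γ 3 = fromBlocks 0 (-σp 2) (σp 2) 0 := rfl

lemma γ5_eq : γ5 = fromBlocks 1 0 0 (-1) := by
  rw [γ5, γ0_eq, γ1_eq, γ2_eq, γ3_eq]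
  simp only [fromBlocks_multiply, Matrix.mul_zero, Matrix.zero_mul, Matrix.mul_one,
    Matrix.one_mul, add_zero, zero_add, Matrix.mul_neg, Matrix.neg_mul, neg_neg,
    fromBlocks_smul, mul_assoc]
  rw [show σp 0 * (σp 1 * σp 2) = Complex.I • 1 by rw [← mul_assoc]; exact sig012]
  congr 1 <;> simp [smul_smul, Complex.I_mul_I]

lemma Pp_eq : Pp = fromBlocks 1 0 0 0 := by
  rw [Pp, γ5_eq, ← fromBlocks_one, fromBlocks_add, fromBlocks_smul]
  congr 1 <;> ext i j <;> fin_cases i <;> fin_cases j <;>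
    simp [Matrix.one_apply] <;> norm_num

lemma Pm_eq : Pm = fromBlocks 0 0 0 1 := by
  rw [Pm, γ5_eq, ← fromBlocks_one]
  rw [sub_eq_add_neg, fromBlocks_neg, fromBlocks_add, fromBlocks_smul]
  congr 1 <;> ext i j <;> fin_cases i <;> fin_cases j <;>
    simp [Matrix.one_apply] <;> norm_num

def blkA (ψ : (Fin 4 → ℝ) → M4) : (Fin 4 → ℝ) → M2 := fun x => (ψ x).toBlocks₁₁
def blkB (ψ : (Fin 4 → ℝ) → M4) : (Fin 4 → ℝ) → M2 := fun x => (ψ x).toBlocks₁₂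
def blkC (ψ : (Fin 4 → ℝ) → M4) : (Fin 4 → ℝ) → M2 := fun x => (ψ x).toBlocks₂₁
def blkD (ψ : (Fin 4 → ℝ) → M4) : (Fin 4 → ℝ) → M2 := fun x => (ψ x).toBlocks₂₂

lemma pdM4_blocks (μ : Fin 4) (ψ : (Fin 4 → ℝ) → M4) (x : Fin 4 → ℝ) :
    pdM4 μ ψ x = fromBlocks (pdM2 μ (blkA ψ) x) (pdM2 μ (blkB ψ) x)
      (pdM2 μ (blkC ψ) x) (pdM2 μ (blkD ψ) x) := by
  ext (i | i) (j | j) <;> rfl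

lemma fs0 : (0 : Fin 3).succ = (1 : Fin 4) := rfl
lemma fs1 : (1 : Fin 3).succ = (2 : Fin 4) := rfl
lemma fs2 : (2 : Fin 3).succ = (3 : Fin 4) := rfl

lemma DiracOp_blocks (ψ : (Fin 4 → ℝ) → M4) (x : Fin 4 → ℝ) :
    DiracOp ψ x = fromBlocks (Dm (blkC ψ) x) (Dm (blkD ψ) x)
      (Dp (blkA ψ) x) (Dp (blkB ψ) x) := by
  rw [DiracOp, Fin.sum_univ_four, γ0_eq, γ1_eq, γ2_eq, γ3_eq,
    pdM4_blocks, pdM4_blocks, pdM4_blocks, pdM4_blocks]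
  simp only [fromBlocks_multiply, Matrix.mul_zero, Matrix.zero_mul, Matrix.mul_one,
    Matrix.one_mul, add_zero, zero_add, Matrix.neg_mul, fromBlocks_add, Dp, Dm,
    Fin.sum_univ_three, fs0, fs1, fs2]
  congr 1 <;> abel

lemma Pmap_blocks (ψ : (Fin 4 → ℝ) → M4) (x : Fin 4 → ℝ) :
    Pmap (ψ x) = fromBlocks (blkA ψ x) 0 0 (blkD ψ x) := by
  conv_lhs => rw [Pmap, Pp_eq, Pm_eq, show ψ x = fromBlocks (blkA ψ x) (blkB ψ x)
    (blkC ψ x) (blkD ψ x) from (fromBlocks_toBlocks (ψ x)).symm]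
  simp only [fromBlocks_multiply, Matrix.mul_zero, Matrix.zero_mul, Matrix.mul_one,
    Matrix.one_mul, add_zero, zero_add, fromBlocks_add]

-- basic pd lemmas
lemma pd_contDiff {f : (Fin 4 → ℝ) → ℂ} (hf : ContDiff ℝ (⊤ : ℕ∞) f) (μ : Fin 4) :
    ContDiff ℝ (⊤ : ℕ∞) (pd μ f) :=
  (hf.fderiv_right (by simp)).clm_apply contDiff_const

lemma pd_diff {f : (Fin 4 → ℝ) → ℂ} (hf : ContDiff ℝ (⊤ : ℕ∞) f) : Differentiable ℝ f :=
  hf.differentiable (by simp)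

lemma pd_add {f g : (Fin 4 → ℝ) → ℂ} (hf : ContDiff ℝ (⊤ : ℕ∞) f) (hg : ContDiff ℝ (⊤ : ℕ∞) g)
    (μ : Fin 4) (x : Fin 4 → ℝ) :
    pd μ (fun y => f y + g y) x = pd μ f x + pd μ g x := by
  unfold pd
  rw [fderiv_fun_add ((pd_diff hf).differentiableAt) ((pd_diff hg).differentiableAt)]
  rfl

lemma pd_const_mul {f : (Fin 4 → ℝ) → ℂ} (hf : ContDiff ℝ (⊤ : ℕ∞) f) (c : ℂ)
    (μ : Fin 4) (x : Fin 4 → ℝ) :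
    pd μ (fun y => c * f y) x = c * pd μ f x := by
  unfold pd
  rw [fderiv_const_mul ((pd_diff hf).differentiableAt) c]
  rfl

lemma pd_sum {ι : Type*} (s : Finset ι) (f : ι → (Fin 4 → ℝ) → ℂ)
    (hf : ∀ i, ContDiff ℝ (⊤ : ℕ∞) (f i)) (μ : Fin 4) (x : Fin 4 → ℝ) :
    pd μ (fun y => ∑ i ∈ s, f i y) x = ∑ i ∈ s, pd μ (f i) x := by
  unfold pd
  rw [fderiv_fun_sum (fun i _ => ((pd_diff (hf i)).differentiableAt))]
  simp

lemma pd_comm {f : (Fin 4 → ℝ) → ℂ} (hf : ContDiff ℝ (⊤ : ℕ∞) f) (μ ν : Fin 4) (x : Fin 4 → ℝ) :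
    pd μ (pd ν f) x = pd ν (pd μ f) x := by
  have hsym : ∀ v w, fderiv ℝ (fderiv ℝ f) x v w = fderiv ℝ (fderiv ℝ f) x w v :=
    (hf.contDiffAt.isSymmSndFDerivAt (by rw [minSmoothness_of_isRCLikeNormedField]; exact WithTop.coe_le_coe.mpr (le_top : (2 : ℕ∞) ≤ ⊤))).eq
  have hd : DifferentiableAt ℝ (fderiv ℝ f) x :=
    ((hf.fderiv_right (m := (⊤ : ℕ∞)) (by simp)).differentiable (by simp)).differentiableAt
  have key : ∀ (a b : Fin 4),
      pd a (pd b f) x = fderiv ℝ (fderiv ℝ f) x (Pi.single a 1) (Pi.single b 1) := by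
    intro a b
    unfold pd
    rw [fderiv_clm_apply hd (differentiableAt_const _)]
    simp
  rw [key, key, hsym]

-- pdM2 lemmas
lemma smooth_pdM2 {F : (Fin 4 → ℝ) → M2} (hF : SmoothM2 F) (μ : Fin 4) :
    SmoothM2 (pdM2 μ F) := fun i j => pd_contDiff (hF i j) μ

lemma smooth_const_mul {F : (Fin 4 → ℝ) → M2} (A : M2) (hF : SmoothM2 F) :
    SmoothM2 (fun x => A * F x) := by
  intro i j
  simp only [Matrix.mul_apply]
  exact ContDiff.sum fun a _ => contDiff_const.mul (hF a j)

lemma smooth_sum {F : Fin 3 → (Fin 4 → ℝ) → M2} (hF : ∀ k, SmoothM2 (F k)) :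
    SmoothM2 (fun x => ∑ k : Fin 3, F k x) := by
  intro i j
  simp only [Matrix.sum_apply]
  exact ContDiff.sum fun k _ => hF k i j

lemma pdM2_add {G H : (Fin 4 → ℝ) → M2} (hG : SmoothM2 G) (hH : SmoothM2 H) (ν : Fin 4) :
    pdM2 ν (fun x => G x + H x) = fun x => pdM2 ν G x + pdM2 ν H x := by
  funext x; ext i j
  show pd ν (fun y => (G y + H y) i j) x = _
  simp only [Matrix.add_apply]
  exact pd_add (hG i j) (hH i j) ν x

lemma pdM2_const_mul {G : (Fin 4 → ℝ) → M2} (A : M2) (hG : SmoothM2 G) (ν : Fin 4) :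
    pdM2 ν (fun x => A * G x) = fun x => A * pdM2 ν G x := by
  funext x; ext i j
  show pd ν (fun y => (A * G y) i j) x = (A * pdM2 ν G x) i j
  simp only [Matrix.mul_apply]
  rw [pd_sum _ _ (fun a => contDiff_const.mul (hG a j))]
  refine Finset.sum_congr rfl fun a _ => ?_
  rw [pd_const_mul (hG a j)]
  rfl

lemma pdM2_sum {G : Fin 3 → (Fin 4 → ℝ) → M2} (hG : ∀ k, SmoothM2 (G k)) (ν : Fin 4) :
    pdM2 ν (fun x => ∑ k : Fin 3, G k x) = fun x => ∑ k : Fin 3, pdM2 ν (G k) x := by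
  funext x; ext i j
  show pd ν (fun y => (∑ k : Fin 3, G k y) i j) x = _
  simp only [Matrix.sum_apply]
  rw [pd_sum _ _ (fun k => hG k i j)]
  rfl

lemma pdM2_comm {F : (Fin 4 → ℝ) → M2} (hF : SmoothM2 F) (μ ν : Fin 4) :
    pdM2 μ (pdM2 ν F) = pdM2 ν (pdM2 μ F) := by
  funext x; ext i j
  exact pd_comm (hF i j) μ ν x

lemma pdM2_smul {G : (Fin 4 → ℝ) → M2} (c : ℂ) (hG : SmoothM2 G) (ν : Fin 4) :
    pdM2 ν (fun x => c • G x) = fun x => c • pdM2 ν G x := by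
  funext x; ext i j
  show pd ν (fun y => (c • G y) i j) x = (c • pdM2 ν G x) i j
  simp only [Matrix.smul_apply, smul_eq_mul]
  exact pd_const_mul (hG i j) c ν x

lemma pdM2_zero (ν : Fin 4) : pdM2 ν (fun _ => (0 : M2)) = fun _ => 0 := by
  funext x; ext i j
  show pd ν (fun _ => (0 : M2) i j) x = (0 : M2) i j
  simp [pd]

lemma pdM2_Dp {F : (Fin 4 → ℝ) → M2} (hF : SmoothM2 F) (ν : Fin 4) :
    pdM2 ν (Dp F) = fun x =>
      pdM2 ν (pdM2 0 F) x + ∑ k : Fin 3, σp k * pdM2 ν (pdM2 k.succ F) x := by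
  have h1 : Dp F = fun x => pdM2 0 F x + ∑ k : Fin 3, σp k * pdM2 k.succ F x := rfl
  rw [h1, pdM2_add (smooth_pdM2 hF 0)
    (smooth_sum fun k => smooth_const_mul _ (smooth_pdM2 hF k.succ)),
    pdM2_sum (fun k => smooth_const_mul _ (smooth_pdM2 hF k.succ))]
  funext x
  congr 1
  refine Finset.sum_congr rfl fun k _ => ?_
  rw [pdM2_const_mul _ (smooth_pdM2 hF k.succ)]

lemma pdM2_Dm {F : (Fin 4 → ℝ) → M2} (hF : SmoothM2 F) (ν : Fin 4) :
    pdM2 ν (Dm F) = fun x =>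
      pdM2 ν (pdM2 0 F) x - ∑ k : Fin 3, σp k * pdM2 ν (pdM2 k.succ F) x := by
  have h1 : Dm F = fun x => pdM2 0 F x + ∑ k : Fin 3, (-σp k) * pdM2 k.succ F x := by
    funext x
    show pdM2 0 F x - _ = _
    simp [sub_eq_add_neg, Matrix.neg_mul, ← Finset.sum_neg_distrib]
  rw [h1, pdM2_add (smooth_pdM2 hF 0)
    (smooth_sum fun k => smooth_const_mul _ (smooth_pdM2 hF k.succ)),
    pdM2_sum (fun k => smooth_const_mul _ (smooth_pdM2 hF k.succ))]
  funext x
  rw [sub_eq_add_neg, ← Finset.sum_neg_distrib]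
  congr 1
  refine Finset.sum_congr rfl fun k _ => ?_
  rw [pdM2_const_mul _ (smooth_pdM2 hF k.succ)]
  simp [Matrix.neg_mul]

lemma box_as_matrix {F : (Fin 4 → ℝ) → M2} (x : Fin 4 → ℝ) :
    (Matrix.of fun i j => boxC (fun y => F y i j) x) =
      pdM2 0 (pdM2 0 F) x - ∑ k : Fin 3, pdM2 k.succ (pdM2 k.succ F) x := by
  ext i j
  show boxC (fun y => F y i j) x = _
  simp only [boxC, Matrix.sub_apply, Matrix.sum_apply]
  rfl

lemma DmDp_box {F : (Fin 4 → ℝ) → M2} (hF : SmoothM2 F) (x : Fin 4 → ℝ) :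
    Dm (Dp F) x = Matrix.of fun i j => boxC (fun y => F y i j) x := by
  rw [box_as_matrix]
  show pdM2 0 (Dp F) x - ∑ k : Fin 3, σp k * pdM2 k.succ (Dp F) x = _
  simp only [Fin.sum_univ_three, fs0, fs1, fs2]
  rw [pdM2_Dp hF 0, pdM2_Dp hF 1, pdM2_Dp hF 2, pdM2_Dp hF 3]
  simp only [Fin.sum_univ_three, fs0, fs1, fs2, mul_add, ← Matrix.mul_assoc]
  rw [pdM2_comm hF 1 0, pdM2_comm hF 2 0, pdM2_comm hF 3 0,
      pdM2_comm hF 2 1, pdM2_comm hF 3 1, pdM2_comm hF 3 2,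
      show σp 0 * σp 0 = 1 from sig_sq 0, show σp 1 * σp 1 = 1 from sig_sq 1,
      show σp 2 * σp 2 = 1 from sig_sq 2,
      show σp 1 * σp 0 = -(σp 0 * σp 1) from sig_anti 1 0 (by decide),
      show σp 2 * σp 0 = -(σp 0 * σp 2) from sig_anti 2 0 (by decide),
      show σp 2 * σp 1 = -(σp 1 * σp 2) from sig_anti 2 1 (by decide)]
  simp only [Matrix.one_mul, Matrix.neg_mul]
  abel

lemma DpDm_box {F : (Fin 4 → ℝ) → M2} (hF : SmoothM2 F) (x : Fin 4 → ℝ) :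
    Dp (Dm F) x = Matrix.of fun i j => boxC (fun y => F y i j) x := by
  rw [box_as_matrix]
  show pdM2 0 (Dm F) x + ∑ k : Fin 3, σp k * pdM2 k.succ (Dm F) x = _
  simp only [Fin.sum_univ_three, fs0, fs1, fs2]
  rw [pdM2_Dm hF 0, pdM2_Dm hF 1, pdM2_Dm hF 2, pdM2_Dm hF 3]
  simp only [Fin.sum_univ_three, fs0, fs1, fs2, mul_sub, mul_add, ← Matrix.mul_assoc]
  rw [pdM2_comm hF 1 0, pdM2_comm hF 2 0, pdM2_comm hF 3 0,
      pdM2_comm hF 2 1, pdM2_comm hF 3 1, pdM2_comm hF 3 2,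
      show σp 0 * σp 0 = 1 from sig_sq 0, show σp 1 * σp 1 = 1 from sig_sq 1,
      show σp 2 * σp 2 = 1 from sig_sq 2,
      show σp 1 * σp 0 = -(σp 0 * σp 1) from sig_anti 1 0 (by decide),
      show σp 2 * σp 0 = -(σp 0 * σp 2) from sig_anti 2 0 (by decide),
      show σp 2 * σp 1 = -(σp 1 * σp 2) from sig_anti 2 1 (by decide)]
  simp only [Matrix.one_mul, Matrix.neg_mul]
  abel

lemma Dp_zero : Dp (fun _ => (0 : M2)) = fun _ => 0 := by
  funext x
  show pdM2 0 (fun _ => (0:M2)) x + ∑ k : Fin 3, σp k * pdM2 k.succ (fun _ => (0:M2)) x = 0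
  simp [pdM2_zero]

lemma Dm_zero : Dm (fun _ => (0 : M2)) = fun _ => 0 := by
  funext x
  show pdM2 0 (fun _ => (0:M2)) x - ∑ k : Fin 3, σp k * pdM2 k.succ (fun _ => (0:M2)) x = 0
  simp [pdM2_zero]

lemma Dp_smul {G : (Fin 4 → ℝ) → M2} (c : ℂ) (hG : SmoothM2 G) :
    Dp (fun x => c • G x) = fun x => c • Dp G x := by
  funext x
  show pdM2 0 _ x + ∑ k : Fin 3, σp k * pdM2 k.succ _ x = c • Dp G x
  rw [Dp]
  simp only [pdM2_smul c hG, Matrix.mul_smul, smul_add, ← Finset.smul_sum]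

lemma Dm_smul {G : (Fin 4 → ℝ) → M2} (c : ℂ) (hG : SmoothM2 G) :
    Dm (fun x => c • G x) = fun x => c • Dm G x := by
  funext x
  show pdM2 0 _ x - ∑ k : Fin 3, σp k * pdM2 k.succ _ x = c • Dm G x
  rw [Dm]
  simp only [pdM2_smul c hG, Matrix.mul_smul, smul_sub, ← Finset.smul_sum]

lemma toBlocks₁₁_zero : (0 : M4).toBlocks₁₁ = 0 := rfl
lemma toBlocks₁₂_zero : (0 : M4).toBlocks₁₂ = 0 := rfl
lemma toBlocks₂₁_zero : (0 : M4).toBlocks₂₁ = 0 := rfl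
lemma toBlocks₂₂_zero : (0 : M4).toBlocks₂₂ = 0 := rfl

/-- every entry of a solution of the photon wave equation satisfies □ψ = 0. -/
theorem photon_entries_satisfy_wave (hbar m : ℝ) (hh : 0 < hbar) (hm : 0 < m)
    (ψ : (Fin 4 → ℝ) → M4) (hψ : SmoothM4 ψ)
    (heq : ∀ x, (-(I * (hbar : ℂ))) • DiracOp ψ x + (m : ℂ) • Pmap (ψ x) = 0) :
    ∀ i j, ∀ x, boxC (fun y => ψ y i j) x = 0 := by
  have hA : SmoothM2 (blkA ψ) := fun i j => hψ (Sum.inl i) (Sum.inl j)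
  have hB : SmoothM2 (blkB ψ) := fun i j => hψ (Sum.inl i) (Sum.inr j)
  have hC : SmoothM2 (blkC ψ) := fun i j => hψ (Sum.inr i) (Sum.inl j)
  have hD : SmoothM2 (blkD ψ) := fun i j => hψ (Sum.inr i) (Sum.inr j)
  have hne : (-(I * (hbar : ℂ))) ≠ 0 :=
    neg_ne_zero.mpr (mul_ne_zero Complex.I_ne_zero
      (Complex.ofReal_ne_zero.mpr hh.ne'))
  -- extract the four block equations
  have hblocks : ∀ x,
      (-(I * (hbar : ℂ))) • Dm (blkC ψ) x + (m : ℂ) • blkA ψ x = 0 ∧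
      (-(I * (hbar : ℂ))) • Dm (blkD ψ) x = 0 ∧
      (-(I * (hbar : ℂ))) • Dp (blkA ψ) x = 0 ∧
      (-(I * (hbar : ℂ))) • Dp (blkB ψ) x + (m : ℂ) • blkD ψ x = 0 := by
    intro x
    have hx := heq x
    rw [DiracOp_blocks, Pmap_blocks, fromBlocks_smul, fromBlocks_smul,
      fromBlocks_add] at hx
    refine ⟨?_, ?_, ?_, ?_⟩
    · have := congrArg Matrix.toBlocks₁₁ hx
      rwa [toBlocks_fromBlocks₁₁, toBlocks₁₁_zero] at this
    · have := congrArg Matrix.toBlocks₁₂ hx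
      rw [toBlocks_fromBlocks₁₂, toBlocks₁₂_zero] at this
      rwa [smul_zero, add_zero] at this
    · have := congrArg Matrix.toBlocks₂₁ hx
      rw [toBlocks_fromBlocks₂₁, toBlocks₂₁_zero] at this
      rwa [smul_zero, add_zero] at this
    · have := congrArg Matrix.toBlocks₂₂ hx
      rwa [toBlocks_fromBlocks₂₂, toBlocks₂₂_zero] at this
  set c : ℂ := -((-(I * (hbar : ℂ)))⁻¹ * (m : ℂ)) with hc
  have hDpA : Dp (blkA ψ) = fun _ => 0 := by
    funext x
    exact (smul_eq_zero.mp (hblocks x).2.2.1).resolve_left hne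
  have hDmD : Dm (blkD ψ) = fun _ => 0 := by
    funext x
    exact (smul_eq_zero.mp (hblocks x).2.1).resolve_left hne
  have hDmC : Dm (blkC ψ) = fun x => c • blkA ψ x := by
    funext x
    have h := (hblocks x).1
    have h2 := congrArg (fun M => (-(I * (hbar : ℂ)))⁻¹ • M) h
    simp only [smul_add, smul_smul, inv_mul_cancel₀ hne, one_smul, smul_zero] at h2
    rw [eq_neg_of_add_eq_zero_left h2, hc, neg_smul]
  have hDpB : Dp (blkB ψ) = fun x => c • blkD ψ x := by
    funext x
    have h := (hblocks x).2.2.2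
    have h2 := congrArg (fun M => (-(I * (hbar : ℂ)))⁻¹ • M) h
    simp only [smul_add, smul_smul, inv_mul_cancel₀ hne, one_smul, smul_zero] at h2
    rw [eq_neg_of_add_eq_zero_left h2, hc, neg_smul]
  -- box of each block is zero
  have boxA : ∀ (a b : Fin 2) (x), boxC (fun y => blkA ψ y a b) x = 0 := by
    intro a b x
    have h := (DmDp_box hA x).symm
    rw [hDpA, Dm_zero] at h
    have := congrArg (fun M => M a b) h
    simpa using this
  have boxD : ∀ (a b : Fin 2) (x), boxC (fun y => blkD ψ y a b) x = 0 := by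
    intro a b x
    have h := (DpDm_box hD x).symm
    rw [hDmD, Dp_zero] at h
    have := congrArg (fun M => M a b) h
    simpa using this
  have boxC' : ∀ (a b : Fin 2) (x), boxC (fun y => blkC ψ y a b) x = 0 := by
    intro a b x
    have h := (DpDm_box hC x).symm
    rw [hDmC, Dp_smul c hA, hDpA] at h
    have := congrArg (fun M => M a b) h
    simpa using this
  have boxB : ∀ (a b : Fin 2) (x), boxC (fun y => blkB ψ y a b) x = 0 := by
    intro a b x
    have h := (DmDp_box hB x).symm
    rw [hDpB, Dm_smul c hD, hDmD] at h
    have := congrArg (fun M => M a b) h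
    simpa using this
  rintro (a | a) (b | b) x
  · exact boxA a b x
  · exact boxB a b x
  · exact boxC' a b x
  · exact boxD a b x
end
end

section
/- A smooth function V = e + i b : R⁴ → ℂ³ (with e, b real-vector-valued) satisfies (∂ₜ + σ·∇)(σ·V) = 0 if and only if the pair (e, b) satisfies the source-free Maxwell equations: ∂ₜe - ∇×b = 0, ∂ₜb + ∇×e = 0, ∇·e = 0, ∇·b = 0. -/
open Matrix Complex Filter Asymptotics

noncomputable section

/-- σ·V for a complex 3-vector V. -/
def sdotC (v : Fin 3 → ℂ) : M2 := ∑ k : Fin 3, v k • σp k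

/-- Spatial curl of a (time-dependent) real 3-vector field on R⁴. -/
def curl3 (v : (Fin 4 → ℝ) → Fin 3 → ℝ) (x : Fin 4 → ℝ) : Fin 3 → ℝ :=
  ![pdR 2 (fun y => v y 2) x - pdR 3 (fun y => v y 1) x,
    pdR 3 (fun y => v y 0) x - pdR 1 (fun y => v y 2) x,
    pdR 1 (fun y => v y 1) x - pdR 2 (fun y => v y 0) x]

/-- Spatial divergence of a real 3-vector field on R⁴. -/
def div3 (v : (Fin 4 → ℝ) → Fin 3 → ℝ) (x : Fin 4 → ℝ) : ℝ :=
  ∑ k : Fin 3, pdR k.succ (fun y => v y k) x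

section Aux

lemma pdR_add (f g : (Fin 4 → ℝ) → ℝ) (hf : Differentiable ℝ f) (hg : Differentiable ℝ g)
    (μ : Fin 4) (x : Fin 4 → ℝ) :
    pdR μ (fun y => f y + g y) x = pdR μ f x + pdR μ g x := by
  unfold pdR; rw [fderiv_fun_add (hf x) (hg x)]; rfl

lemma pdR_sub (f g : (Fin 4 → ℝ) → ℝ) (hf : Differentiable ℝ f) (hg : Differentiable ℝ g)
    (μ : Fin 4) (x : Fin 4 → ℝ) :
    pdR μ (fun y => f y - g y) x = pdR μ f x - pdR μ g x := by
  unfold pdR; rw [fderiv_fun_sub (hf x) (hg x)]; rfl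

lemma pdR_neg (f : (Fin 4 → ℝ) → ℝ) (μ : Fin 4) (x : Fin 4 → ℝ) :
    pdR μ (fun y => -f y) x = -pdR μ f x := by
  unfold pdR; rw [fderiv_fun_neg]; rfl

lemma pd_comb (f g : (Fin 4 → ℝ) → ℝ) (hf : Differentiable ℝ f) (hg : Differentiable ℝ g)
    (μ : Fin 4) (x : Fin 4 → ℝ) :
    pd μ (fun y => (f y : ℂ) + I * (g y : ℂ)) x = (pdR μ f x : ℂ) + I * (pdR μ g x : ℂ) := by
  have h1 : HasFDerivAt (fun y => (f y : ℂ)) (Complex.ofRealCLM.comp (fderiv ℝ f x)) x :=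
    Complex.ofRealCLM.hasFDerivAt.comp x (hf x).hasFDerivAt
  have h2 : HasFDerivAt (fun y => (g y : ℂ)) (Complex.ofRealCLM.comp (fderiv ℝ g x)) x :=
    Complex.ofRealCLM.hasFDerivAt.comp x (hg x).hasFDerivAt
  have h2' := h2.const_smul (R := ℂ) I
  have h : HasFDerivAt (fun y => (f y : ℂ) + I * (g y : ℂ))
      (Complex.ofRealCLM.comp (fderiv ℝ f x) + I • Complex.ofRealCLM.comp (fderiv ℝ g x)) x := by
    simpa [smul_eq_mul, Pi.add_def, Pi.smul_def] using h1.add h2'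
  unfold pd pdR
  rw [h.fderiv]
  simp [smul_eq_mul]

lemma sdotC_eq (v : Fin 3 → ℂ) :
    sdotC v = !![v 2, v 0 - I * v 1; v 0 + I * v 1, -v 2] := by
  ext i j
  fin_cases i <;> fin_cases j <;>
    simp [sdotC, σp, Fin.sum_univ_three] <;> ring

variable (e b : (Fin 4 → ℝ) → Fin 3 → ℝ)

lemma hm_lemma (he : ∀ k, ContDiff ℝ (⊤ : ℕ∞) (fun x => e x k)) (hb : ∀ k, ContDiff ℝ (⊤ : ℕ∞) (fun x => b x k))
    (μ : Fin 4) (x : Fin 4 → ℝ) :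
    pdM2 μ (fun y => sdotC (fun k => (e y k : ℂ) + I * (b y k : ℂ))) x =
    !![(pdR μ (fun y => e y 2) x : ℂ) + I * (pdR μ (fun y => b y 2) x : ℂ),
       ((pdR μ (fun y => e y 0) x + pdR μ (fun y => b y 1) x : ℝ) : ℂ)
         + I * ((pdR μ (fun y => b y 0) x - pdR μ (fun y => e y 1) x : ℝ) : ℂ);
       ((pdR μ (fun y => e y 0) x - pdR μ (fun y => b y 1) x : ℝ) : ℂ)
         + I * ((pdR μ (fun y => b y 0) x + pdR μ (fun y => e y 1) x : ℝ) : ℂ),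
       ((-pdR μ (fun y => e y 2) x : ℝ) : ℂ) + I * ((-pdR μ (fun y => b y 2) x : ℝ) : ℂ)] := by
  have de : ∀ k, Differentiable ℝ (fun y => e y k) := fun k => (he k).differentiable (by simp)
  have db : ∀ k, Differentiable ℝ (fun y => b y k) := fun k => (hb k).differentiable (by simp)
  ext i j
  fin_cases i <;> fin_cases j <;>
    simp only [pdM2, Matrix.of_apply, sdotC_eq, Fin.zero_eta, Fin.mk_one, Matrix.cons_val',
      Matrix.cons_val_zero, Matrix.cons_val_one, Matrix.head_cons, Matrix.head_fin_const,
      Matrix.empty_val', Matrix.cons_val_fin_one]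
  · rw [pd_comb _ _ (de 2) (db 2)]
  · have : (fun y => ((e y 0 : ℂ) + I * (b y 0 : ℂ)) - I * ((e y 1 : ℂ) + I * (b y 1 : ℂ)))
        = fun y => ((e y 0 + b y 1 : ℝ) : ℂ) + I * ((b y 0 - e y 1 : ℝ) : ℂ) := by
      funext y; push_cast; linear_combination (-(b y 1 : ℂ)) * Complex.I_mul_I
    rw [this, pd_comb _ _ ((de 0).fun_add (db 1)) ((db 0).fun_sub (de 1)),
      pdR_add _ _ (de 0) (db 1), pdR_sub _ _ (db 0) (de 1)]
  · have : (fun y => ((e y 0 : ℂ) + I * (b y 0 : ℂ)) + I * ((e y 1 : ℂ) + I * (b y 1 : ℂ)))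
        = fun y => ((e y 0 - b y 1 : ℝ) : ℂ) + I * ((b y 0 + e y 1 : ℝ) : ℂ) := by
      funext y; push_cast; linear_combination ((b y 1 : ℂ)) * Complex.I_mul_I
    rw [this, pd_comb _ _ ((de 0).fun_sub (db 1)) ((db 0).fun_add (de 1)),
      pdR_sub _ _ (de 0) (db 1), pdR_add _ _ (db 0) (de 1)]
  · have : (fun y => -((e y 2 : ℂ) + I * (b y 2 : ℂ)))
        = fun y => ((-e y 2 : ℝ) : ℂ) + I * ((-b y 2 : ℝ) : ℂ) := by
      funext y; push_cast; ring
    rw [this, pd_comb _ _ (de 2).fun_neg (db 2).fun_neg, pdR_neg, pdR_neg]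

lemma fin2_zero_iff (a b c d : ℂ) : !![a, b; c, d] = 0 ↔ a = 0 ∧ b = 0 ∧ c = 0 ∧ d = 0 := by
  constructor
  · intro h
    exact ⟨by simpa using congrFun (congrFun h 0) 0, by simpa using congrFun (congrFun h 0) 1,
      by simpa using congrFun (congrFun h 1) 0, by simpa using congrFun (congrFun h 1) 1⟩
  · rintro ⟨h1, h2, h3, h4⟩
    ext i j
    fin_cases i <;> fin_cases j <;> simp_all

lemma reim_zero (a b : ℝ) : ((a : ℂ) + I * (b : ℂ) = 0) ↔ a = 0 ∧ b = 0 := by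
  constructor
  · intro h
    constructor
    · have := congrArg Complex.re h; simpa using this
    · have := congrArg Complex.im h; simpa using this
  · rintro ⟨h1, h2⟩; simp [h1, h2]


lemma hD_lemma (he : ∀ k, ContDiff ℝ (⊤ : ℕ∞) (fun x => e x k)) (hb : ∀ k, ContDiff ℝ (⊤ : ℕ∞) (fun x => b x k))
    (x : Fin 4 → ℝ) :
    Dp (fun y => sdotC (fun k => (e y k : ℂ) + I * (b y k : ℂ))) x =
    !![((pdR 0 (fun y => e y 2) x + pdR 1 (fun y => e y 0) x + pdR 2 (fun y => e y 1) x
          + pdR 3 (fun y => e y 2) x - pdR 1 (fun y => b y 1) x + pdR 2 (fun y => b y 0) x : ℝ) : ℂ)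
        + I * ((pdR 0 (fun y => b y 2) x + pdR 1 (fun y => b y 0) x + pdR 2 (fun y => b y 1) x
          + pdR 3 (fun y => b y 2) x + pdR 1 (fun y => e y 1) x - pdR 2 (fun y => e y 0) x : ℝ) : ℂ),
       ((pdR 0 (fun y => e y 0) x + pdR 0 (fun y => b y 1) x - pdR 1 (fun y => e y 2) x
          - pdR 2 (fun y => b y 2) x + pdR 3 (fun y => e y 0) x + pdR 3 (fun y => b y 1) x : ℝ) : ℂ)
        + I * ((pdR 0 (fun y => b y 0) x - pdR 0 (fun y => e y 1) x - pdR 1 (fun y => b y 2) x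
          + pdR 2 (fun y => e y 2) x + pdR 3 (fun y => b y 0) x - pdR 3 (fun y => e y 1) x : ℝ) : ℂ);
       ((pdR 0 (fun y => e y 0) x - pdR 0 (fun y => b y 1) x + pdR 1 (fun y => e y 2) x
          - pdR 2 (fun y => b y 2) x - pdR 3 (fun y => e y 0) x + pdR 3 (fun y => b y 1) x : ℝ) : ℂ)
        + I * ((pdR 0 (fun y => b y 0) x + pdR 0 (fun y => e y 1) x + pdR 1 (fun y => b y 2) x
          + pdR 2 (fun y => e y 2) x - pdR 3 (fun y => b y 0) x - pdR 3 (fun y => e y 1) x : ℝ) : ℂ),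
       ((-pdR 0 (fun y => e y 2) x + pdR 1 (fun y => e y 0) x + pdR 2 (fun y => e y 1) x
          + pdR 3 (fun y => e y 2) x + pdR 1 (fun y => b y 1) x - pdR 2 (fun y => b y 0) x : ℝ) : ℂ)
        + I * ((-pdR 0 (fun y => b y 2) x + pdR 1 (fun y => b y 0) x + pdR 2 (fun y => b y 1) x
          + pdR 3 (fun y => b y 2) x - pdR 1 (fun y => e y 1) x + pdR 2 (fun y => e y 0) x : ℝ) : ℂ)] := by
  show pdM2 0 _ x + ∑ k : Fin 3, σp k * pdM2 k.succ _ x = _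
  rw [Fin.sum_univ_three]
  simp only [show (Fin.succ 0 : Fin 4) = 1 from rfl, show (Fin.succ 1 : Fin 4) = 2 from rfl,
    show (Fin.succ 2 : Fin 4) = 3 from rfl]
  rw [hm_lemma e b he hb 0 x, hm_lemma e b he hb 1 x, hm_lemma e b he hb 2 x,
    hm_lemma e b he hb 3 x]
  ext i j
  fin_cases i <;> fin_cases j
  · simp [σp, Matrix.mul_apply, Fin.sum_univ_two]
    linear_combination (-((pdR 2 (fun y => b y 0) x : ℂ) + (pdR 2 (fun y => e y 1) x : ℂ)))
      * Complex.I_mul_I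
  · simp [σp, Matrix.mul_apply, Fin.sum_univ_two]
    linear_combination ((pdR 2 (fun y => b y 2) x : ℂ)) * Complex.I_mul_I
  · simp [σp, Matrix.mul_apply, Fin.sum_univ_two]
    linear_combination ((pdR 2 (fun y => b y 2) x : ℂ)) * Complex.I_mul_I
  · simp [σp, Matrix.mul_apply, Fin.sum_univ_two]
    linear_combination ((pdR 2 (fun y => b y 0) x : ℂ) - (pdR 2 (fun y => e y 1) x : ℂ))
      * Complex.I_mul_I

end Aux

/-- (∂ₜ + σ·∇)(σ·(e+ib)) = 0 iff (e,b) satisfies the source-free Maxwell equations. -/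
theorem weyl_iff_maxwell (e b : (Fin 4 → ℝ) → Fin 3 → ℝ)
    (he : ∀ k, ContDiff ℝ (⊤ : ℕ∞) (fun x => e x k)) (hb : ∀ k, ContDiff ℝ (⊤ : ℕ∞) (fun x => b x k)) :
    (∀ x, Dp (fun y => sdotC (fun k => (e y k : ℂ) + I * (b y k : ℂ))) x = 0) ↔
    ((∀ x k, pdR 0 (fun y => e y k) x - curl3 b x k = 0) ∧
     (∀ x k, pdR 0 (fun y => b y k) x + curl3 e x k = 0) ∧
     (∀ x, div3 e x = 0) ∧
     (∀ x, div3 b x = 0)) := by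
  constructor
  · intro H
    have key : ∀ x : Fin 4 → ℝ,
        (pdR 0 (fun y => e y 2) x + pdR 1 (fun y => e y 0) x + pdR 2 (fun y => e y 1) x
          + pdR 3 (fun y => e y 2) x - pdR 1 (fun y => b y 1) x + pdR 2 (fun y => b y 0) x = 0) ∧
        (pdR 0 (fun y => b y 2) x + pdR 1 (fun y => b y 0) x + pdR 2 (fun y => b y 1) x
          + pdR 3 (fun y => b y 2) x + pdR 1 (fun y => e y 1) x - pdR 2 (fun y => e y 0) x = 0) ∧
        (pdR 0 (fun y => e y 0) x + pdR 0 (fun y => b y 1) x - pdR 1 (fun y => e y 2) x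
          - pdR 2 (fun y => b y 2) x + pdR 3 (fun y => e y 0) x + pdR 3 (fun y => b y 1) x = 0) ∧
        (pdR 0 (fun y => b y 0) x - pdR 0 (fun y => e y 1) x - pdR 1 (fun y => b y 2) x
          + pdR 2 (fun y => e y 2) x + pdR 3 (fun y => b y 0) x - pdR 3 (fun y => e y 1) x = 0) ∧
        (pdR 0 (fun y => e y 0) x - pdR 0 (fun y => b y 1) x + pdR 1 (fun y => e y 2) x
          - pdR 2 (fun y => b y 2) x - pdR 3 (fun y => e y 0) x + pdR 3 (fun y => b y 1) x = 0) ∧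
        (pdR 0 (fun y => b y 0) x + pdR 0 (fun y => e y 1) x + pdR 1 (fun y => b y 2) x
          + pdR 2 (fun y => e y 2) x - pdR 3 (fun y => b y 0) x - pdR 3 (fun y => e y 1) x = 0) ∧
        (-pdR 0 (fun y => e y 2) x + pdR 1 (fun y => e y 0) x + pdR 2 (fun y => e y 1) x
          + pdR 3 (fun y => e y 2) x + pdR 1 (fun y => b y 1) x - pdR 2 (fun y => b y 0) x = 0) ∧
        (-pdR 0 (fun y => b y 2) x + pdR 1 (fun y => b y 0) x + pdR 2 (fun y => b y 1) x
          + pdR 3 (fun y => b y 2) x - pdR 1 (fun y => e y 1) x + pdR 2 (fun y => e y 0) x = 0) := by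
      intro x
      have h := H x
      rw [hD_lemma e b he hb x, fin2_zero_iff] at h
      obtain ⟨h1, h2, h3, h4⟩ := h
      rw [reim_zero] at h1 h2 h3 h4
      exact ⟨h1.1, h1.2, h2.1, h2.2, h3.1, h3.2, h4.1, h4.2⟩
    refine ⟨fun x k => ?_, fun x k => ?_, fun x => ?_, fun x => ?_⟩
    · obtain ⟨a1, a2, a3, a4, a5, a6, a7, a8⟩ := key x
      fin_cases k <;> simp [curl3] <;> linarith
    · obtain ⟨a1, a2, a3, a4, a5, a6, a7, a8⟩ := key x
      fin_cases k <;> simp [curl3] <;> linarith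
    · obtain ⟨a1, a2, a3, a4, a5, a6, a7, a8⟩ := key x
      simp only [div3, Fin.sum_univ_three, show (Fin.succ 0 : Fin 4) = 1 from rfl,
        show (Fin.succ 1 : Fin 4) = 2 from rfl, show (Fin.succ 2 : Fin 4) = 3 from rfl]
      linarith
    · obtain ⟨a1, a2, a3, a4, a5, a6, a7, a8⟩ := key x
      simp only [div3, Fin.sum_univ_three, show (Fin.succ 0 : Fin 4) = 1 from rfl,
        show (Fin.succ 1 : Fin 4) = 2 from rfl, show (Fin.succ 2 : Fin 4) = 3 from rfl]
      linarith
  · rintro ⟨h1, h2, h3, h4⟩ x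
    have m10 := h1 x 0; have m11 := h1 x 1; have m12 := h1 x 2
    have m20 := h2 x 0; have m21 := h2 x 1; have m22 := h2 x 2
    have d1 := h3 x; have d2 := h4 x
    simp only [curl3, Matrix.cons_val_zero, Matrix.cons_val_one, Matrix.head_cons,
      Matrix.cons_val_two, Matrix.tail_cons] at m10 m11 m12 m20 m21 m22
    simp only [div3, Fin.sum_univ_three, show (Fin.succ 0 : Fin 4) = 1 from rfl,
      show (Fin.succ 1 : Fin 4) = 2 from rfl, show (Fin.succ 2 : Fin 4) = 3 from rfl] at d1 d2
    rw [hD_lemma e b he hb x, fin2_zero_iff]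
    refine ⟨?_, ?_, ?_, ?_⟩ <;> rw [reim_zero] <;> constructor <;> linarith
end
end

section
/- If a smooth solution ψ = [[φ₊,χ₋],[χ₊,φ₋]] of the photon wave equation -iħ\slashed{D}ψ + mΠψ = 0 is modified by a gauge transformation ψ' := ψ + (1-Π)Υ where Υ is any smooth solution of the massless Dirac equation \slashed{D}Υ = 0, then ψ' is again a solution of the photon wave equation, and its diagonal blocks are unchanged: φ±' = φ±. -/
open Matrix Complex Filter Asymptotics

noncomputable section

section Aux

lemma PpPp : Pp * Pp = Pp := by simp [Pp_eq, Matrix.fromBlocks_multiply]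
lemma PmPm : Pm * Pm = Pm := by simp [Pm_eq, Matrix.fromBlocks_multiply]
lemma PpPm : Pp * Pm = 0 := by
  simp [Pp_eq, Pm_eq, Matrix.fromBlocks_multiply, ← Matrix.fromBlocks_zero]
lemma PmPp : Pm * Pp = 0 := by
  simp [Pp_eq, Pm_eq, Matrix.fromBlocks_multiply, ← Matrix.fromBlocks_zero]
lemma PpPm_one : Pp + Pm = 1 := by
  rw [Pp_eq, Pm_eq]
  simp [Matrix.fromBlocks_add, Matrix.fromBlocks_one]

lemma γ_form (μ : Fin 4) : ∃ A B : M2, γ μ = fromBlocks 0 A B 0 := by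
  fin_cases μ
  · exact ⟨1, 1, rfl⟩
  · exact ⟨-σp 0, σp 0, rfl⟩
  · exact ⟨-σp 1, σp 1, rfl⟩
  · exact ⟨-σp 2, σp 2, rfl⟩

lemma Pp_γ (μ : Fin 4) : Pp * γ μ = γ μ * Pm := by
  obtain ⟨A, B, h⟩ := γ_form μ
  simp [h, Pp_eq, Pm_eq, Matrix.fromBlocks_multiply]

lemma Pm_γ (μ : Fin 4) : Pm * γ μ = γ μ * Pp := by
  obtain ⟨A, B, h⟩ := γ_form μ
  simp [h, Pp_eq, Pm_eq, Matrix.fromBlocks_multiply]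

lemma Pmap_add (A B : M4) : Pmap (A + B) = Pmap A + Pmap B := by
  simp only [Pmap, mul_add, add_mul]; abel

lemma Pmap_sub (A B : M4) : Pmap (A - B) = Pmap A - Pmap B := by
  simp only [Pmap, mul_sub, sub_mul]; abel

lemma Pmap_zero : Pmap 0 = 0 := by simp [Pmap]

lemma Pmap_fromBlocks_eq (A : M4) :
    Pmap A = fromBlocks (A.toBlocks₁₁) 0 0 (A.toBlocks₂₂) := by
  conv_lhs => rw [← Matrix.fromBlocks_toBlocks A]
  simp [Pmap, Pp_eq, Pm_eq, Matrix.fromBlocks_multiply, Matrix.fromBlocks_add]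

lemma Pmap_idem (A : M4) : Pmap (Pmap A) = Pmap A := by
  simp [Pmap_fromBlocks_eq, Matrix.toBlocks_fromBlocks₁₁, Matrix.toBlocks_fromBlocks₂₂]

lemma Pmap_gamma (μ : Fin 4) (B : M4) :
    Pmap (γ μ * B) = γ μ * (B - Pmap B) := by
  have h : B - Pmap B = Pp * B * Pm + Pm * B * Pp := by
    have hB : B = (Pp + Pm) * B * (Pp + Pm) := by rw [PpPm_one]; simp
    rw [Pmap]
    nth_rewrite 1 [hB]
    simp only [add_mul, mul_add]
    abel
  rw [h, Pmap]
  have e1 : Pp * (γ μ * B) * Pp = γ μ * (Pm * B * Pp) := by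
    simp only [← mul_assoc]; rw [Pp_γ]
  have e2 : Pm * (γ μ * B) * Pm = γ μ * (Pp * B * Pm) := by
    simp only [← mul_assoc]; rw [Pm_γ]
  rw [e1, e2, ← mul_add, add_comm]

/- Analysis lemmas -/

lemma pdM4_add (μ : Fin 4) (f g : (Fin 4 → ℝ) → M4) (hf : SmoothM4 f) (hg : SmoothM4 g)
    (x : Fin 4 → ℝ) :
    pdM4 μ (fun y => f y + g y) x = pdM4 μ f x + pdM4 μ g x := by
  ext i j
  simp only [pdM4, pd, Matrix.of_apply, Matrix.add_apply]
  rw [fderiv_fun_add ((hf i j).differentiable (by simp) x) ((hg i j).differentiable (by simp) x)]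
  simp

lemma pdM4_sub (μ : Fin 4) (f g : (Fin 4 → ℝ) → M4) (hf : SmoothM4 f) (hg : SmoothM4 g)
    (x : Fin 4 → ℝ) :
    pdM4 μ (fun y => f y - g y) x = pdM4 μ f x - pdM4 μ g x := by
  ext i j
  simp only [pdM4, pd, Matrix.of_apply, Matrix.sub_apply]
  rw [fderiv_fun_sub ((hf i j).differentiable (by simp) x) ((hg i j).differentiable (by simp) x)]
  simp

lemma pdM4_const_mul (μ : Fin 4) (C : M4) (f : (Fin 4 → ℝ) → M4) (hf : SmoothM4 f)
    (x : Fin 4 → ℝ) :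
    pdM4 μ (fun y => C * f y) x = C * pdM4 μ f x := by
  ext i j
  simp only [pdM4, pd, Matrix.of_apply, Matrix.mul_apply]
  rw [fderiv_fun_sum (fun k _ => ((hf k j).differentiable (by simp) x).const_mul _)]
  simp only [ContinuousLinearMap.sum_apply]
  refine Finset.sum_congr rfl fun k _ => ?_
  rw [fderiv_const_mul ((hf k j).differentiable (by simp) x)]
  simp

lemma pdM4_mul_const (μ : Fin 4) (C : M4) (f : (Fin 4 → ℝ) → M4) (hf : SmoothM4 f)
    (x : Fin 4 → ℝ) :
    pdM4 μ (fun y => f y * C) x = pdM4 μ f x * C := by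
  ext i j
  simp only [pdM4, pd, Matrix.of_apply, Matrix.mul_apply]
  rw [fderiv_fun_sum (fun k _ => ((hf i k).differentiable (by simp) x).mul_const _)]
  simp only [ContinuousLinearMap.sum_apply]
  refine Finset.sum_congr rfl fun k _ => ?_
  rw [fderiv_mul_const ((hf i k).differentiable (by simp) x)]
  simp [mul_comm]

lemma smooth_const_mul_s19 (C : M4) (f : (Fin 4 → ℝ) → M4) (hf : SmoothM4 f) :
    SmoothM4 (fun y => C * f y) := by
  intro i j
  simp only [Matrix.mul_apply]
  exact ContDiff.sum fun k _ => (contDiff_const).mul (hf k j)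

lemma smooth_mul_const (C : M4) (f : (Fin 4 → ℝ) → M4) (hf : SmoothM4 f) :
    SmoothM4 (fun y => f y * C) := by
  intro i j
  simp only [Matrix.mul_apply]
  exact ContDiff.sum fun k _ => (hf i k).mul contDiff_const

lemma smooth_Pmap (f : (Fin 4 → ℝ) → M4) (hf : SmoothM4 f) :
    SmoothM4 (fun y => Pmap (f y)) := by
  intro i j
  simp only [Pmap, Matrix.add_apply]
  exact ((smooth_mul_const Pp _ (smooth_const_mul_s19 Pp f hf)) i j).add
    ((smooth_mul_const Pm _ (smooth_const_mul_s19 Pm f hf)) i j)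

lemma pdM4_Pmap (μ : Fin 4) (f : (Fin 4 → ℝ) → M4) (hf : SmoothM4 f) (x : Fin 4 → ℝ) :
    pdM4 μ (fun y => Pmap (f y)) x = Pmap (pdM4 μ f x) := by
  simp only [Pmap]
  rw [pdM4_add μ _ _ (smooth_mul_const Pp _ (smooth_const_mul_s19 Pp f hf))
      (smooth_mul_const Pm _ (smooth_const_mul_s19 Pm f hf)),
    pdM4_mul_const μ _ _ (smooth_const_mul_s19 Pp f hf),
    pdM4_mul_const μ _ _ (smooth_const_mul_s19 Pm f hf),
    pdM4_const_mul μ _ _ hf, pdM4_const_mul μ _ _ hf]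

lemma DiracOp_add (f g : (Fin 4 → ℝ) → M4) (hf : SmoothM4 f) (hg : SmoothM4 g)
    (x : Fin 4 → ℝ) :
    DiracOp (fun y => f y + g y) x = DiracOp f x + DiracOp g x := by
  simp only [DiracOp, pdM4_add _ _ _ hf hg, mul_add]
  rw [Finset.sum_add_distrib]

lemma Pmap_sum {s : Finset (Fin 4)} (f : Fin 4 → M4) :
    Pmap (∑ μ ∈ s, f μ) = ∑ μ ∈ s, Pmap (f μ) := by
  simp [Pmap, Finset.mul_sum, Finset.sum_mul, Finset.sum_add_distrib]

end Aux

/-- gauge transformations ψ' = ψ + (1-Π)Υ with D-slash Υ = 0 preserve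
the photon wave equation and leave the diagonal blocks unchanged. -/
theorem gauge_invariance (hbar m : ℝ)
    (ψ Υ : (Fin 4 → ℝ) → M4) (hψ : SmoothM4 ψ) (hΥ : SmoothM4 Υ)
    (heq : ∀ x, (-(I * (hbar : ℂ))) • DiracOp ψ x + (m : ℂ) • Pmap (ψ x) = 0)
    (hgauge : ∀ x, DiracOp Υ x = 0) :
    (∀ x, (-(I * (hbar : ℂ))) • DiracOp (fun y => ψ y + (Υ y - Pmap (Υ y))) x
        + (m : ℂ) • Pmap (ψ x + (Υ x - Pmap (Υ x))) = 0) ∧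
    (∀ x (i j : Fin 2),
      (ψ x + (Υ x - Pmap (Υ x))) (Sum.inl i) (Sum.inl j) = ψ x (Sum.inl i) (Sum.inl j)) ∧
    (∀ x (i j : Fin 2),
      (ψ x + (Υ x - Pmap (Υ x))) (Sum.inr i) (Sum.inr j) = ψ x (Sum.inr i) (Sum.inr j)) := by
  have hg : SmoothM4 (fun y => Υ y - Pmap (Υ y)) := by
    intro i j
    simp only [Matrix.sub_apply]
    exact (hΥ i j).sub (smooth_Pmap Υ hΥ i j)
  refine ⟨fun x => ?_, fun x i j => ?_, fun x i j => ?_⟩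
  · have hD0 : DiracOp (fun y => Υ y - Pmap (Υ y)) x = 0 := by
      have h1 : DiracOp (fun y => Υ y - Pmap (Υ y)) x
          = ∑ μ : Fin 4, Pmap (γ μ * pdM4 μ Υ x) := by
        simp only [DiracOp]
        refine Finset.sum_congr rfl fun μ _ => ?_
        rw [pdM4_sub μ _ _ hΥ (smooth_Pmap Υ hΥ), pdM4_Pmap μ Υ hΥ, Pmap_gamma]
      rw [h1, ← Pmap_sum]
      have h2 : (∑ μ : Fin 4, γ μ * pdM4 μ Υ x) = DiracOp Υ x := rfl
      rw [h2, hgauge x, Pmap_zero]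
    rw [DiracOp_add ψ _ hψ hg, hD0, add_zero, Pmap_add, Pmap_sub, Pmap_idem,
      sub_self, add_zero]
    exact heq x
  · simp [Pmap_fromBlocks_eq, Matrix.toBlocks₁₁]
  · simp [Pmap_fromBlocks_eq, Matrix.toBlocks₂₂]
end
end
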